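/- Let T be an HC tree of order n that is locally optimal with respect to the interchange operation for a similarity function w : {1,…,n}×{1,…,n} → ℝ≥0. Then for every internal node of T whose two children subtrees have leaf sets C and D, writing F = C ∪ D and s(F) = Σ_{i<j, i,j∈F} w(i,j), one has 2·s(F) ≥ (|F|−1)·(1/|C| + 1/|D|)·w(C,D). -/

import Mathlib

/-- A (rooted, full) binary tree with leaves labeled by elements of `α`. -/
inductive HCTree (α : Type) : Type
  | leaf : α → HCTree α
  | node : HCTree α → HCTree α → HCTree α
  deriving DecidableEq

namespace HCTree

variable {α : Type} [DecidableEq α]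

/-- The set of leaf labels of a tree. -/
def leaves : HCTree α → Finset α
  | leaf a => {a}
  | node l r => leaves l ∪ leaves r

/-- The tree is a valid HC tree: all leaf labels are pairwise distinct. -/
def Proper : HCTree α → Prop
  | leaf _ => True
  | node l r => Proper l ∧ Proper r ∧ Disjoint (leaves l) (leaves r)

/-- The number of leaves of the subtree rooted at the lowest common ancestor
of the leaves `i` and `j` (i.e. `|T_{i,j}|`). -/
def lcaSize : HCTree α → α → α → ℕ
  | leaf _, _, _ => 1
  | node l r, i, j =>
      if i ∈ leaves l ∧ j ∈ leaves l then lcaSize l i j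
      else if i ∈ leaves r ∧ j ∈ leaves r then lcaSize r i j
      else (leaves l ∪ leaves r).card

/-- `Σ_{i<j, i,j ∈ L} w i j`. -/
noncomputable def pairsSum [LinearOrder α] (w : α → α → ℝ) (L : Finset α) : ℝ :=
  ∑ i ∈ L, ∑ j ∈ L, if i < j then w i j else 0

/-- Moseley–Wang revenue of `T` with respect to its own leaf set:
`rev(T) = Σ_{i<j} w(i,j) (|L| - |T_{i,j}|)`. -/
noncomputable def rev [LinearOrder α] (w : α → α → ℝ) (T : HCTree α) : ℝ :=
  ∑ i ∈ T.leaves, ∑ j ∈ T.leaves,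
    if i < j then w i j * ((T.leaves.card : ℝ) - (T.lcaSize i j : ℝ)) else 0

/-- Dasgupta cost: `cost(T) = Σ_{i<j} w(i,j) |T_{i,j}|`. -/
noncomputable def cost [LinearOrder α] (w : α → α → ℝ) (T : HCTree α) : ℝ :=
  ∑ i ∈ T.leaves, ∑ j ∈ T.leaves,
    if i < j then w i j * (T.lcaSize i j : ℝ) else 0

/-- `w(A,B) = Σ_{i∈A, j∈B} w(i,j)`. -/
noncomputable def wSet (w : α → α → ℝ) (A B : Finset α) : ℝ := ∑ i ∈ A, ∑ j ∈ B, w i j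

/-- One-hole contexts for `HCTree`. -/
inductive Ctx (α : Type) : Type
  | hole : Ctx α
  | nodeL : Ctx α → HCTree α → Ctx α
  | nodeR : HCTree α → Ctx α → Ctx α

/-- Filling the hole of a context with a tree. -/
def Ctx.fill {α : Type} : Ctx α → HCTree α → HCTree α
  | Ctx.hole, T => T
  | Ctx.nodeL K r, T => node (Ctx.fill K T) r
  | Ctx.nodeR l K, T => node l (Ctx.fill K T)

/-- Equality of HC trees as *unordered* trees (children of a node are unordered). -/
inductive TEq : HCTree α → HCTree α → Prop
  | leaf (a : α) : TEq (leaf a) (leaf a)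
  | node {l r l' r' : HCTree α} : TEq l l' → TEq r r' → TEq (node l r) (node l' r')
  | swap {l r l' r' : HCTree α} : TEq l r' → TEq r l' → TEq (node l r) (node l' r')

/-- `T'` is obtained from `T` by a single interchange operation: at an edge `(x,y)`
where `x` is internal with parent `y`, the subtrees rooted at the children of `x`
have leaf sets `A` and `B`, and the other child of `y` has leaf set `C`; the
operation swaps the `B`-subtree with the `C`-subtree, or the `A`-subtree with
the `C`-subtree. -/
def Interchange {α : Type} (T T' : HCTree α) : Prop :=
  ∃ (K : Ctx α) (A B C : HCTree α),
    T = K.fill (node (node A B) C) ∧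
    (T' = K.fill (node (node A C) B) ∨ T' = K.fill (node (node C B) A))

/-- `T` is locally optimal: no interchange, performed on any presentation `S` of
`T` as an unordered tree, strictly increases the revenue. -/
def LocalOpt [LinearOrder α] (w : α → α → ℝ) (T : HCTree α) : Prop :=
  ∀ S S' : HCTree α, TEq T S → Interchange S S' → rev w S' ≤ rev w T

/-- One step of local search: an interchange, up to unordered-tree equality. -/
def IStep (T T' : HCTree α) : Prop :=
  ∃ S S' : HCTree α, TEq T S ∧ Interchange S S' ∧ TEq S' T'

/-- The interchange distance: minimum number of interchange operations needed to
convert `T₁` into `T₂` (as unordered trees). -/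
noncomputable def idist (T₁ T₂ : HCTree α) : ℕ :=
  sInf {k : ℕ | ∃ f : ℕ → HCTree α, f 0 = T₁ ∧ TEq (f k) T₂ ∧
    ∀ i < k, IStep (f i) (f (i + 1))}

/-- The total cost of all merges of `T`: the sum over internal nodes, with
children leaf sets `A`, `B`, of `(|A|+|B|)·w(A,B)`. -/
noncomputable def mergeCostSum (w : α → α → ℝ) : HCTree α → ℝ
  | leaf _ => 0
  | node l r => mergeCostSum w l + mergeCostSum w r
      + ((l.leaves.card : ℝ) + (r.leaves.card : ℝ)) * wSet w l.leaves r.leaves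

/-- The total revenue of all merges of `T` in a tree of order `n`: the sum over
internal nodes, with children leaf sets `A`, `B`, of `(n-|A|-|B|)·w(A,B)`. -/
noncomputable def mergeRevSum (w : α → α → ℝ) (n : ℕ) : HCTree α → ℝ
  | leaf _ => 0
  | node l r => mergeRevSum w n l + mergeRevSum w n r
      + ((n : ℝ) - (l.leaves.card : ℝ) - (r.leaves.card : ℝ)) * wSet w l.leaves r.leaves

/-- Average similarity between two clusters. -/
noncomputable def sim (w : α → α → ℝ) (A B : Finset α) : ℝ :=
  wSet w A B / ((A.card : ℝ) * (B.card : ℝ))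

/-- The forests (partial hierarchies) reachable by the average link algorithm:
start from singletons, and repeatedly merge two clusters of maximal average
similarity. -/
inductive AvgLinkForest [Fintype α] (w : α → α → ℝ) : Finset (HCTree α) → Prop
  | init : AvgLinkForest w (Finset.univ.image (leaf : α → HCTree α))
  | merge {F : Finset (HCTree α)} {A B : HCTree α} :
      AvgLinkForest w F → A ∈ F → B ∈ F → A ≠ B →
      (∀ X ∈ F, ∀ Y ∈ F, X ≠ Y → sim w X.leaves Y.leaves ≤ sim w A.leaves B.leaves) →
      AvgLinkForest w (insert (node A B) ((F.erase A).erase B))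

/-- `T` is produced by some execution of the average link algorithm. -/
def AvgLinkTree [Fintype α] (w : α → α → ℝ) (T : HCTree α) : Prop :=
  AvgLinkForest w {T}

/-! ### Auxiliary lemmas -/

set_option linter.unusedSectionVars false
set_option linter.unusedVariables false

theorem teq_refl (T : HCTree α) : TEq T T := by
  induction T with
  | leaf a => exact TEq.leaf a
  | node l r ihl ihr => exact TEq.node ihl ihr

theorem teq_leaves {X Y : HCTree α} (h : TEq X Y) : X.leaves = Y.leaves := by
  induction h with
  | leaf a => rfl
  | node h1 h2 ih1 ih2 => simp [leaves, ih1, ih2]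
  | swap h1 h2 ih1 ih2 => simp [leaves, ih1, ih2, Finset.union_comm]

theorem teq_proper {X Y : HCTree α} (h : TEq X Y) (hp : X.Proper) : Y.Proper := by
  induction h with
  | leaf a => trivial
  | node h1 h2 ih1 ih2 =>
      obtain ⟨p1, p2, hd⟩ := hp
      exact ⟨ih1 p1, ih2 p2, (teq_leaves h1) ▸ (teq_leaves h2) ▸ hd⟩
  | swap h1 h2 ih1 ih2 =>
      obtain ⟨p1, p2, hd⟩ := hp
      exact ⟨ih2 p2, ih1 p1, (teq_leaves h2) ▸ (teq_leaves h1) ▸ hd.symm⟩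

theorem teq_fill {S S' : HCTree α} (h : TEq S S') :
    ∀ K : Ctx α, TEq (K.fill S) (K.fill S')
  | Ctx.hole => h
  | Ctx.nodeL K r => TEq.node (teq_fill h K) (teq_refl r)
  | Ctx.nodeR l K => TEq.node (teq_refl l) (teq_fill h K)

theorem leaves_nonempty (T : HCTree α) : T.leaves.Nonempty := by
  induction T with
  | leaf a => exact ⟨a, by simp [leaves]⟩
  | node l r ihl ihr =>
      obtain ⟨x, hx⟩ := ihl
      exact ⟨x, by simp [leaves, hx]⟩

theorem leaves_card_pos (T : HCTree α) : 0 < T.leaves.card :=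
  Finset.card_pos.mpr (leaves_nonempty T)

theorem fill_leaves_congr {S S' : HCTree α} (h : S.leaves = S'.leaves) :
    ∀ K : Ctx α, (K.fill S).leaves = (K.fill S').leaves
  | Ctx.hole => h
  | Ctx.nodeL K r => by simp [Ctx.fill, leaves, fill_leaves_congr h K]
  | Ctx.nodeR l K => by simp [Ctx.fill, leaves, fill_leaves_congr h K]

theorem proper_fill_sub {S : HCTree α} :
    ∀ K : Ctx α, (K.fill S).Proper → S.Proper
  | Ctx.hole, h => h
  | Ctx.nodeL K r, h => proper_fill_sub K h.1
  | Ctx.nodeR l K, h => proper_fill_sub K h.2.1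

theorem proper_fill_congr {S S' : HCTree α} (hl : S'.leaves = S.leaves)
    (hp' : S'.Proper) : ∀ K : Ctx α, (K.fill S).Proper → (K.fill S').Proper
  | Ctx.hole, _ => hp'
  | Ctx.nodeL K r, h =>
      ⟨proper_fill_congr hl hp' K h.1, h.2.1,
        (fill_leaves_congr hl.symm K) ▸ h.2.2⟩
  | Ctx.nodeR l K, h =>
      ⟨h.1, proper_fill_congr hl hp' K h.2.1,
        (fill_leaves_congr hl.symm K) ▸ h.2.2⟩

/-- Composition of contexts. -/
def Ctx.comp : Ctx α → Ctx α → Ctx α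
  | Ctx.hole, K2 => K2
  | Ctx.nodeL K r, K2 => Ctx.nodeL (Ctx.comp K K2) r
  | Ctx.nodeR l K, K2 => Ctx.nodeR l (Ctx.comp K K2)

theorem Ctx.fill_comp (K2 : Ctx α) (S : HCTree α) :
    ∀ K1 : Ctx α, (K1.comp K2).fill S = K1.fill (K2.fill S)
  | Ctx.hole => rfl
  | Ctx.nodeL K r => by simp [Ctx.comp, Ctx.fill, Ctx.fill_comp K2 S K]
  | Ctx.nodeR l K => by simp [Ctx.comp, Ctx.fill, Ctx.fill_comp K2 S K]

theorem wSet_comm {w : α → α → ℝ} (hsym : ∀ i j, w i j = w j i)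
    (a b : Finset α) : wSet w a b = wSet w b a := by
  unfold wSet
  rw [Finset.sum_comm]
  exact Finset.sum_congr rfl fun i _ => Finset.sum_congr rfl fun j _ => hsym j i

theorem wSet_union_left {w : α → α → ℝ} {a b : Finset α} (hd : Disjoint a b)
    (e : Finset α) : wSet w (a ∪ b) e = wSet w a e + wSet w b e := by
  unfold wSet; exact Finset.sum_union hd

theorem wSet_nonneg {w : α → α → ℝ} (hnonneg : ∀ i j, 0 ≤ w i j)
    (a b : Finset α) : 0 ≤ wSet w a b :=
  Finset.sum_nonneg fun i _ => Finset.sum_nonneg fun j _ => hnonneg i j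

theorem cross_sum [LinearOrder α] {a b : Finset α} (hd : Disjoint a b)
    (g : α → α → ℝ) (hg : ∀ i j, g i j = g j i) :
    ((∑ i ∈ a, ∑ j ∈ b, if i < j then g i j else 0)
      + ∑ i ∈ b, ∑ j ∈ a, if i < j then g i j else 0)
      = ∑ i ∈ a, ∑ j ∈ b, g i j := by
  rw [Finset.sum_comm (s := b) (t := a)]
  rw [← Finset.sum_add_distrib]
  refine Finset.sum_congr rfl fun i hi => ?_
  rw [← Finset.sum_add_distrib]
  refine Finset.sum_congr rfl fun j hj => ?_
  have hne : i ≠ j := fun h => Finset.disjoint_left.mp hd hi (h ▸ hj)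
  rcases lt_trichotomy i j with h | h | h
  · rw [if_pos h, if_neg (not_lt.mpr h.le)]; ring
  · exact absurd h hne
  · rw [if_neg (not_lt.mpr h.le), if_pos h, hg j i]; ring

theorem pairsSum_union [LinearOrder α] {w : α → α → ℝ}
    (hsym : ∀ i j, w i j = w j i) {a b : Finset α} (hd : Disjoint a b) :
    pairsSum w (a ∪ b) = pairsSum w a + pairsSum w b + wSet w a b := by
  unfold pairsSum
  rw [Finset.sum_union hd]
  simp only [Finset.sum_union hd]
  rw [Finset.sum_add_distrib, Finset.sum_add_distrib]
  have h := cross_sum hd w hsym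
  unfold wSet
  linarith

theorem lca_left {l r : HCTree α} {i j : α} (hi : i ∈ l.leaves) (hj : j ∈ l.leaves) :
    lcaSize (node l r) i j = lcaSize l i j := by
  simp [lcaSize, hi, hj]

theorem lca_right {l r : HCTree α} (hd : Disjoint l.leaves r.leaves)
    {i j : α} (hi : i ∈ r.leaves) (hj : j ∈ r.leaves) :
    lcaSize (node l r) i j = lcaSize r i j := by
  have hi' : i ∉ l.leaves := Finset.disjoint_right.mp hd hi
  simp [lcaSize, hi', hi, hj]

theorem lca_cross {l r : HCTree α} (hd : Disjoint l.leaves r.leaves)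
    {i j : α} (h : ¬(i ∈ l.leaves ∧ j ∈ l.leaves) ∧ ¬(i ∈ r.leaves ∧ j ∈ r.leaves)) :
    lcaSize (node l r) i j = (l.leaves ∪ r.leaves).card := by
  simp [lcaSize, h.1, h.2]

theorem revN_eq_mergeRevSum [LinearOrder α] {w : α → α → ℝ}
    (hsym : ∀ i j, w i j = w j i) (m : ℕ) (T : HCTree α) (hp : T.Proper) :
    (∑ i ∈ T.leaves, ∑ j ∈ T.leaves,
        if i < j then w i j * ((m : ℝ) - (T.lcaSize i j : ℝ)) else 0)
      = mergeRevSum w m T := by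
  induction T with
  | leaf a => simp [leaves, mergeRevSum]
  | node l r ihl ihr =>
      obtain ⟨pl, pr, hd⟩ := hp
      have hll : ∀ i ∈ l.leaves, ∀ j ∈ l.leaves,
          (if i < j then w i j * ((m : ℝ) - ((node l r).lcaSize i j : ℝ)) else 0)
            = (if i < j then w i j * ((m : ℝ) - (l.lcaSize i j : ℝ)) else 0) := by
        intro i hi j hj; rw [lca_left hi hj]
      have hrr : ∀ i ∈ r.leaves, ∀ j ∈ r.leaves,
          (if i < j then w i j * ((m : ℝ) - ((node l r).lcaSize i j : ℝ)) else 0)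
            = (if i < j then w i j * ((m : ℝ) - (r.lcaSize i j : ℝ)) else 0) := by
        intro i hi j hj; rw [lca_right hd hi hj]
      have hc : ((l.leaves ∪ r.leaves).card : ℝ)
          = (l.leaves.card : ℝ) + (r.leaves.card : ℝ) := by
        rw [Finset.card_union_of_disjoint hd]; push_cast; ring
      have hlr : ∀ i ∈ l.leaves, ∀ j ∈ r.leaves,
          (if i < j then w i j * ((m : ℝ) - ((node l r).lcaSize i j : ℝ)) else 0)
            = (if i < j then w i j * ((m : ℝ) - ((l.leaves ∪ r.leaves).card : ℝ)) else 0) := by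
        intro i hi j hj
        rw [lca_cross hd ⟨fun h => Finset.disjoint_right.mp hd hj h.2,
          fun h => Finset.disjoint_left.mp hd hi h.1⟩]
      have hrl : ∀ i ∈ r.leaves, ∀ j ∈ l.leaves,
          (if i < j then w i j * ((m : ℝ) - ((node l r).lcaSize i j : ℝ)) else 0)
            = (if i < j then w i j * ((m : ℝ) - ((l.leaves ∪ r.leaves).card : ℝ)) else 0) := by
        intro i hi j hj
        rw [lca_cross hd ⟨fun h => Finset.disjoint_right.mp hd hi h.1,
          fun h => Finset.disjoint_left.mp hd hj h.2⟩]
      have hleaves : (node l r).leaves = l.leaves ∪ r.leaves := rfl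
      rw [hleaves, Finset.sum_union hd]
      simp only [Finset.sum_union hd]
      rw [Finset.sum_add_distrib, Finset.sum_add_distrib]
      have e1 : (∑ i ∈ l.leaves, ∑ j ∈ l.leaves,
          if i < j then w i j * ((m : ℝ) - ((node l r).lcaSize i j : ℝ)) else 0)
          = mergeRevSum w m l := by
        rw [Finset.sum_congr rfl fun i hi => Finset.sum_congr rfl fun j hj => hll i hi j hj]
        exact ihl pl
      have e2 : (∑ i ∈ r.leaves, ∑ j ∈ r.leaves,
          if i < j then w i j * ((m : ℝ) - ((node l r).lcaSize i j : ℝ)) else 0)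
          = mergeRevSum w m r := by
        rw [Finset.sum_congr rfl fun i hi => Finset.sum_congr rfl fun j hj => hrr i hi j hj]
        exact ihr pr
      have e3 : ((∑ i ∈ l.leaves, ∑ j ∈ r.leaves,
          if i < j then w i j * ((m : ℝ) - ((node l r).lcaSize i j : ℝ)) else 0)
          + ∑ i ∈ r.leaves, ∑ j ∈ l.leaves,
          if i < j then w i j * ((m : ℝ) - ((node l r).lcaSize i j : ℝ)) else 0)
          = ((m : ℝ) - (l.leaves.card : ℝ) - (r.leaves.card : ℝ))
              * wSet w l.leaves r.leaves := by
        rw [Finset.sum_congr rfl fun i hi => Finset.sum_congr rfl fun j hj => hlr i hi j hj,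
          Finset.sum_congr rfl fun i hi => Finset.sum_congr rfl fun j hj => hrl i hi j hj]
        rw [cross_sum hd (fun i j => w i j * ((m : ℝ) - ((l.leaves ∪ r.leaves).card : ℝ)))
          (fun i j => by show w i j * _ = w j i * _; rw [hsym i j])]
        simp only [← Finset.sum_mul]
        rw [hc]
        unfold wSet
        ring
      rw [mergeRevSum]
      linarith

theorem rev_eq_mergeRevSum [LinearOrder α] {w : α → α → ℝ}
    (hsym : ∀ i j, w i j = w j i) {T : HCTree α} (hp : T.Proper) :
    rev w T = mergeRevSum w T.leaves.card T :=
  revN_eq_mergeRevSum hsym T.leaves.card T hp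

theorem mergeRevSum_teq {w : α → α → ℝ} (hsym : ∀ i j, w i j = w j i)
    (m : ℕ) {X Y : HCTree α} (h : TEq X Y) :
    mergeRevSum w m X = mergeRevSum w m Y := by
  induction h with
  | leaf a => rfl
  | node h1 h2 ih1 ih2 =>
      simp only [mergeRevSum, ih1, ih2, teq_leaves h1, teq_leaves h2]
  | swap h1 h2 ih1 ih2 =>
      simp only [mergeRevSum, ih1, ih2, teq_leaves h1, teq_leaves h2]
      rw [wSet_comm hsym]
      ring

theorem mergeRevSum_fill_congr {w : α → α → ℝ} (m : ℕ)
    {S S' : HCTree α} (h : S.leaves = S'.leaves) :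
    ∀ K : Ctx α, mergeRevSum w m (K.fill S) + mergeRevSum w m S'
      = mergeRevSum w m (K.fill S') + mergeRevSum w m S := by
  intro K
  induction K with
  | hole => simp only [Ctx.fill]; ring
  | nodeL K r ih =>
      simp only [Ctx.fill, mergeRevSum, fill_leaves_congr h K]
      linarith
  | nodeR l K ih =>
      simp only [Ctx.fill, mergeRevSum, fill_leaves_congr h K]
      linarith

/-- The key consequence of local optimality at one edge: with children `A`, `B`
and uncle `E`, both `|B|·w(A,E) ≤ |E|·w(A,B)` and `|A|·w(B,E) ≤ |E|·w(A,B)`. -/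
theorem interchange_ineq [LinearOrder α] {w : α → α → ℝ}
    (hsym : ∀ i j, w i j = w j i)
    {T : HCTree α} (hproper : T.Proper) (hopt : T.LocalOpt w)
    {K : Ctx α} {A B E : HCTree α}
    (hT : TEq T (K.fill (node (node A B) E))) :
    wSet w A.leaves E.leaves * (B.leaves.card : ℝ)
        ≤ wSet w A.leaves B.leaves * (E.leaves.card : ℝ) ∧
      wSet w B.leaves E.leaves * (A.leaves.card : ℝ)
        ≤ wSet w A.leaves B.leaves * (E.leaves.card : ℝ) := by
  set S1 : HCTree α := node (node A B) E with hS1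
  set Sp : HCTree α := K.fill S1 with hSp
  have hpSp : Sp.Proper := teq_proper hT hproper
  have hpS1 : S1.Proper := proper_fill_sub K hpSp
  obtain ⟨⟨pA, pB, dab⟩, pE, dabe⟩ := hpS1
  have dae : Disjoint A.leaves E.leaves := (Finset.disjoint_union_left.mp dabe).1
  have dbe : Disjoint B.leaves E.leaves := (Finset.disjoint_union_left.mp dabe).2
  have hlT : T.leaves = Sp.leaves := teq_leaves hT
  set m : ℕ := T.leaves.card with hm
  have hrevT : rev w T = mergeRevSum w m Sp := by
    rw [rev_eq_mergeRevSum hsym hproper, mergeRevSum_teq hsym m hT]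
  -- a generic helper applying one interchange
  have main : ∀ S2 : HCTree α, S2.Proper → S2.leaves = S1.leaves →
      Interchange Sp (K.fill S2) →
      mergeRevSum w m S2 ≤ mergeRevSum w m S1 := by
    intro S2 hpS2 hl2 hint
    have hrle : rev w (K.fill S2) ≤ rev w T := hopt Sp (K.fill S2) hT hint
    have hpf2 : (K.fill S2).Proper := proper_fill_congr hl2 hpS2 K hpSp
    have hlf2 : (K.fill S2).leaves = Sp.leaves := fill_leaves_congr hl2 K
    have hcard2 : (K.fill S2).leaves.card = m := by rw [hlf2, hm, hlT]
    have hrev2 : rev w (K.fill S2) = mergeRevSum w m (K.fill S2) := by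
      rw [rev_eq_mergeRevSum hsym hpf2, hcard2]
    have hkey : mergeRevSum w m (K.fill S2) ≤ mergeRevSum w m Sp := by
      rw [← hrev2, ← hrevT]; exact hrle
    have hfc := mergeRevSum_fill_congr (w := w) m hl2.symm K
    linarith
  have hcab : ((A.leaves ∪ B.leaves).card : ℝ)
      = (A.leaves.card : ℝ) + (B.leaves.card : ℝ) := by
    rw [Finset.card_union_of_disjoint dab]; push_cast; ring
  have hcae : ((A.leaves ∪ E.leaves).card : ℝ)
      = (A.leaves.card : ℝ) + (E.leaves.card : ℝ) := by
    rw [Finset.card_union_of_disjoint dae]; push_cast; ring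
  have hceb : ((E.leaves ∪ B.leaves).card : ℝ)
      = (E.leaves.card : ℝ) + (B.leaves.card : ℝ) := by
    rw [Finset.card_union_of_disjoint dbe.symm]; push_cast; ring
  have hm1 : mergeRevSum w m S1 = mergeRevSum w m A + mergeRevSum w m B
      + mergeRevSum w m E
      + ((m : ℝ) - (A.leaves.card : ℝ) - (B.leaves.card : ℝ)) * wSet w A.leaves B.leaves
      + ((m : ℝ) - (A.leaves.card : ℝ) - (B.leaves.card : ℝ) - (E.leaves.card : ℝ))
          * (wSet w A.leaves E.leaves + wSet w B.leaves E.leaves) := by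
    simp only [hS1, mergeRevSum, leaves, hcab, wSet_union_left dab]
    ring
  constructor
  · -- swap B and E
    set S2 : HCTree α := node (node A E) B with hS2
    have hl2 : S2.leaves = S1.leaves := by
      simp only [hS1, hS2, leaves]
      rw [Finset.union_right_comm]
    have hpS2 : S2.Proper :=
      ⟨⟨pA, pE, dae⟩, pB, Finset.disjoint_union_left.mpr ⟨dab, dbe.symm⟩⟩
    have h := main S2 hpS2 hl2 ⟨K, A, B, E, rfl, Or.inl rfl⟩
    have hm2 : mergeRevSum w m S2 = mergeRevSum w m A + mergeRevSum w m B
        + mergeRevSum w m E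
        + ((m : ℝ) - (A.leaves.card : ℝ) - (E.leaves.card : ℝ)) * wSet w A.leaves E.leaves
        + ((m : ℝ) - (A.leaves.card : ℝ) - (E.leaves.card : ℝ) - (B.leaves.card : ℝ))
            * (wSet w A.leaves B.leaves + wSet w B.leaves E.leaves) := by
      simp only [hS2, mergeRevSum, leaves, hcae, wSet_union_left dae,
        wSet_comm hsym E.leaves B.leaves]
      ring
    rw [hm1, hm2] at h
    linarith
  · -- swap A and E
    set S2 : HCTree α := node (node E B) A with hS2
    have hl2 : S2.leaves = S1.leaves := by
      simp only [hS1, hS2, leaves]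
      ext x
      simp only [Finset.mem_union]
      tauto
    have hpS2 : S2.Proper :=
      ⟨⟨pE, pB, dbe.symm⟩, pA, Finset.disjoint_union_left.mpr ⟨dae.symm, dab.symm⟩⟩
    have h := main S2 hpS2 hl2 ⟨K, A, B, E, rfl, Or.inr rfl⟩
    have hm2 : mergeRevSum w m S2 = mergeRevSum w m A + mergeRevSum w m B
        + mergeRevSum w m E
        + ((m : ℝ) - (E.leaves.card : ℝ) - (B.leaves.card : ℝ)) * wSet w B.leaves E.leaves
        + ((m : ℝ) - (E.leaves.card : ℝ) - (B.leaves.card : ℝ) - (A.leaves.card : ℝ))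
            * (wSet w A.leaves E.leaves + wSet w A.leaves B.leaves) := by
      simp only [hS2, mergeRevSum, leaves, hceb, wSet_union_left dbe.symm,
        wSet_comm hsym E.leaves B.leaves, wSet_comm hsym E.leaves A.leaves,
        wSet_comm hsym B.leaves A.leaves]
      ring
    rw [hm1, hm2] at h
    linarith

/-- The similarity of the top merge of a tree. -/
noncomputable def topsim (w : α → α → ℝ) : HCTree α → ℝ
  | leaf _ => 0
  | node l r => wSet w l.leaves r.leaves / ((l.leaves.card : ℝ) * (r.leaves.card : ℝ))

theorem pairsSum_singleton [LinearOrder α] (w : α → α → ℝ) (a : α) :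
    pairsSum w {a} = 0 := by
  simp [pairsSum]

/-- Main induction: in a locally optimal tree, every subtree `S` satisfies
`|S|·(|S|-1)·topsim(S) ≤ 2·s(leaves S)`. -/
theorem subtree_bound [LinearOrder α] {w : α → α → ℝ}
    (hsym : ∀ i j, w i j = w j i)
    {T : HCTree α} (hproper : T.Proper) (hopt : T.LocalOpt w)
    (S : HCTree α) :
    ∀ K : Ctx α, T = K.fill S →
      (S.leaves.card : ℝ) * ((S.leaves.card : ℝ) - 1) * topsim w S
        ≤ 2 * pairsSum w S.leaves := by
  induction S with
  | leaf a => intro K hT; simp [leaves, pairsSum, topsim]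
  | node l r ihl ihr =>
    intro K hT
    have hp : (node l r).Proper := proper_fill_sub K (hT ▸ hproper)
    obtain ⟨pl, pr, hd⟩ := hp
    have hnl : (0 : ℝ) < (l.leaves.card : ℝ) := by
      exact_mod_cast leaves_card_pos l
    have hnr : (0 : ℝ) < (r.leaves.card : ℝ) := by
      exact_mod_cast leaves_card_pos r
    set σ : ℝ := topsim w (node l r) with hσ
    have hσdef : σ = wSet w l.leaves r.leaves
        / ((l.leaves.card : ℝ) * (r.leaves.card : ℝ)) := rfl
    have hW : wSet w l.leaves r.leaves
        = σ * ((l.leaves.card : ℝ) * (r.leaves.card : ℝ)) := by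
      rw [hσdef, div_mul_cancel₀]
      positivity
    -- Step A: bound for the left child
    have sl : (l.leaves.card : ℝ) * ((l.leaves.card : ℝ) - 1) * σ
        ≤ 2 * pairsSum w l.leaves := by
      have hTl : T = (K.comp (Ctx.nodeL Ctx.hole r)).fill l := by
        rw [Ctx.fill_comp]; exact hT
      have ihl' := ihl (K.comp (Ctx.nodeL Ctx.hole r)) hTl
      cases l with
      | leaf a =>
          simp only [leaves, Finset.card_singleton, Nat.cast_one,
            pairsSum_singleton]
          norm_num
      | node A B =>
          have hTE : TEq T (K.fill (node (node A B) r)) := by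
            rw [hT]; exact teq_refl _
          obtain ⟨h1, h2⟩ := interchange_ineq hsym hproper hopt hTE
          obtain ⟨pA, pB, dAB⟩ := pl
          have hnA : (0 : ℝ) < (A.leaves.card : ℝ) := by
            exact_mod_cast leaves_card_pos A
          have hnB : (0 : ℝ) < (B.leaves.card : ℝ) := by
            exact_mod_cast leaves_card_pos B
          have hcl : ((node A B).leaves.card : ℝ)
              = (A.leaves.card : ℝ) + (B.leaves.card : ℝ) := by
            simp only [leaves]
            rw [Finset.card_union_of_disjoint dAB]; push_cast; ring
          have hWl : wSet w (node A B).leaves r.leaves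
              = wSet w A.leaves r.leaves + wSet w B.leaves r.leaves := by
            simp only [leaves]; exact wSet_union_left dAB r.leaves
          have hts : topsim w (node A B)
              = wSet w A.leaves B.leaves
                / ((A.leaves.card : ℝ) * (B.leaves.card : ℝ)) := rfl
          have hσle : σ ≤ topsim w (node A B) := by
            rw [hσdef, hts, hWl, hcl, div_le_div_iff₀ (mul_pos (add_pos hnA hnB) hnr) (mul_pos hnA hnB)]
            nlinarith [h1, h2, hnA.le, hnB.le]
          have hcoef : (0 : ℝ) ≤ ((node A B).leaves.card : ℝ)
              * (((node A B).leaves.card : ℝ) - 1) := by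
            have hnA1 : (1 : ℝ) ≤ (A.leaves.card : ℝ) := by
              exact_mod_cast leaves_card_pos A
            have hnB1 : (1 : ℝ) ≤ (B.leaves.card : ℝ) := by
              exact_mod_cast leaves_card_pos B
            rw [hcl]; nlinarith [hnA1, hnB1]
          calc ((node A B).leaves.card : ℝ) * (((node A B).leaves.card : ℝ) - 1) * σ
              ≤ ((node A B).leaves.card : ℝ) * (((node A B).leaves.card : ℝ) - 1)
                  * topsim w (node A B) := by
                exact mul_le_mul_of_nonneg_left hσle hcoef
            _ ≤ 2 * pairsSum w (node A B).leaves := ihl'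
    -- Step B: bound for the right child
    have sr : (r.leaves.card : ℝ) * ((r.leaves.card : ℝ) - 1) * σ
        ≤ 2 * pairsSum w r.leaves := by
      have hTr : T = (K.comp (Ctx.nodeR l Ctx.hole)).fill r := by
        rw [Ctx.fill_comp]; exact hT
      have ihr' := ihr (K.comp (Ctx.nodeR l Ctx.hole)) hTr
      cases r with
      | leaf a =>
          simp only [leaves, Finset.card_singleton, Nat.cast_one,
            pairsSum_singleton]
          norm_num
      | node A B =>
          have hTE : TEq T (K.fill (node (node A B) l)) := by
            rw [hT]
            exact teq_fill (TEq.swap (teq_refl l) (teq_refl (node A B))) K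
          obtain ⟨h1, h2⟩ := interchange_ineq hsym hproper hopt hTE
          obtain ⟨pA, pB, dAB⟩ := pr
          have hnA : (0 : ℝ) < (A.leaves.card : ℝ) := by
            exact_mod_cast leaves_card_pos A
          have hnB : (0 : ℝ) < (B.leaves.card : ℝ) := by
            exact_mod_cast leaves_card_pos B
          have hcr : ((node A B).leaves.card : ℝ)
              = (A.leaves.card : ℝ) + (B.leaves.card : ℝ) := by
            simp only [leaves]
            rw [Finset.card_union_of_disjoint dAB]; push_cast; ring
          have hWr : wSet w l.leaves (node A B).leaves
              = wSet w A.leaves l.leaves + wSet w B.leaves l.leaves := by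
            rw [wSet_comm hsym]
            simp only [leaves]; exact wSet_union_left dAB l.leaves
          have hts : topsim w (node A B)
              = wSet w A.leaves B.leaves
                / ((A.leaves.card : ℝ) * (B.leaves.card : ℝ)) := rfl
          have hσle : σ ≤ topsim w (node A B) := by
            rw [hσdef, hts, hWr, hcr, div_le_div_iff₀ (mul_pos hnl (add_pos hnA hnB)) (mul_pos hnA hnB)]
            nlinarith [h1, h2, hnA.le, hnB.le]
          have hcoef : (0 : ℝ) ≤ ((node A B).leaves.card : ℝ)
              * (((node A B).leaves.card : ℝ) - 1) := by
            have hnA1 : (1 : ℝ) ≤ (A.leaves.card : ℝ) := by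
              exact_mod_cast leaves_card_pos A
            have hnB1 : (1 : ℝ) ≤ (B.leaves.card : ℝ) := by
              exact_mod_cast leaves_card_pos B
            rw [hcr]; nlinarith [hnA1, hnB1]
          calc ((node A B).leaves.card : ℝ) * (((node A B).leaves.card : ℝ) - 1) * σ
              ≤ ((node A B).leaves.card : ℝ) * (((node A B).leaves.card : ℝ) - 1)
                  * topsim w (node A B) := by
                exact mul_le_mul_of_nonneg_left hσle hcoef
            _ ≤ 2 * pairsSum w (node A B).leaves := ihr'
    -- combine
    have hps : pairsSum w (node l r).leaves
        = pairsSum w l.leaves + pairsSum w r.leaves + wSet w l.leaves r.leaves := by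
      simp only [leaves]; exact pairsSum_union hsym hd
    have hcard : (((node l r).leaves.card : ℝ))
        = (l.leaves.card : ℝ) + (r.leaves.card : ℝ) := by
      simp only [leaves]
      rw [Finset.card_union_of_disjoint hd]; push_cast; ring
    rw [hps, hcard, hW]
    set a : ℝ := (l.leaves.card : ℝ)
    set b : ℝ := (r.leaves.card : ℝ)
    have hident : (a + b) * ((a + b) - 1) * σ
        = a * (a - 1) * σ + b * (b - 1) * σ + 2 * (σ * (a * b)) := by ring
    rw [hident]
    linarith

end HCTree
open HCTree in
/-- in a locally optimal tree, every internal node with children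
leaf sets `C`, `D` and `F = C ∪ D` satisfies
`2·s(F) ≥ (|F|-1)·(1/|C| + 1/|D|)·w(C,D)`. -/
theorem locally_optimal_internal_node_ineq {n : ℕ} (w : Fin n → Fin n → ℝ)
    (hsym : ∀ i j, w i j = w j i) (hnonneg : ∀ i j, 0 ≤ w i j)
    (T : HCTree (Fin n)) (hproper : T.Proper) (horder : T.leaves = Finset.univ)
    (hopt : T.LocalOpt w)
    (K : Ctx (Fin n)) (C D : HCTree (Fin n)) (hsub : T = K.fill (HCTree.node C D)) :
    2 * pairsSum w (C.leaves ∪ D.leaves) ≥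
      (((C.leaves ∪ D.leaves).card : ℝ) - 1) *
        (1 / (C.leaves.card : ℝ) + 1 / (D.leaves.card : ℝ)) *
          wSet w C.leaves D.leaves := by
  have hb := subtree_bound hsym hproper hopt (HCTree.node C D) K hsub
  have hp : (HCTree.node C D).Proper := proper_fill_sub K (hsub ▸ hproper)
  obtain ⟨pC, pD, hd⟩ := hp
  have hnc : (0 : ℝ) < (C.leaves.card : ℝ) := by exact_mod_cast leaves_card_pos C
  have hnd : (0 : ℝ) < (D.leaves.card : ℝ) := by exact_mod_cast leaves_card_pos D
  have hcard : (((C.leaves ∪ D.leaves).card : ℝ))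
      = (C.leaves.card : ℝ) + (D.leaves.card : ℝ) := by
    rw [Finset.card_union_of_disjoint hd]; push_cast; ring
  have hts : topsim w (HCTree.node C D)
      = wSet w C.leaves D.leaves / ((C.leaves.card : ℝ) * (D.leaves.card : ℝ)) := rfl
  have hleq : (HCTree.node C D).leaves = C.leaves ∪ D.leaves := rfl
  rw [hleq, hts, hcard] at hb
  rw [ge_iff_le, hcard]
  have heq : ((C.leaves.card : ℝ) + (D.leaves.card : ℝ) - 1)
        * (1 / (C.leaves.card : ℝ) + 1 / (D.leaves.card : ℝ))
        * wSet w C.leaves D.leaves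
      = ((C.leaves.card : ℝ) + (D.leaves.card : ℝ))
          * (((C.leaves.card : ℝ) + (D.leaves.card : ℝ)) - 1)
          * (wSet w C.leaves D.leaves
              / ((C.leaves.card : ℝ) * (D.leaves.card : ℝ))) := by
    field_simp
    ring_nf
  rw [heq]
  exact hb
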